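/- Let κ ≤ λ be cardinals with κ regular and uncountable and λ^{<κ} = λ, and suppose κ has the λ-filter extension property. Then every κ-consistent set Φ of L_{κ,1} propositional formulas over a set of at most 2^λ propositional variables is satisfiable. -/

import Mathlib

/-!
Hausdorff's construction gives, on a set `Λ` of size `lam = lam ^< κ`, a `κ`-independent family
`(A x)_{x ∈ V}` of `2 ^ lam` subsets: every Boolean pattern on fewer than `κ` of them is realised
by a point. Interpreting each variable `x` as `A x`, the `κ`-consistency of `Φ` makes the sets
`φ.interp A`, `φ ∈ Φ`, have the `κ`-intersection property, so they generate a proper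
`κ`-complete filter on `Λ`. A `κ`-complete ultrafilter `U` extending it commutes with
complements and with intersections of fewer than `κ` sets, so `x ↦ (A x ∈ U)` satisfies `Φ`.
-/

open Cardinal

/-- Propositional formulas of the logic `L_{κ,1}` over a set `V` of propositional
variables: the least class containing the variables and closed under negation and
under conjunctions (here of arbitrary index type; the size restriction `< κ` is the
predicate `PropForm.Small` below). -/
inductive PropForm (V : Type u) : Type (u + 1)
  | var : V → PropForm V
  | neg : PropForm V → PropForm V
  | conj : (ι : Type u) → (ι → PropForm V) → PropForm V

namespace PropForm

/-- A formula is in `L_{κ,1}` when all of its conjunctions have fewer than `κ` conjuncts. -/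
def Small (κ : Cardinal.{u}) {V : Type u} : PropForm V → Prop
  | var _ => True
  | neg φ => φ.Small κ
  | conj ι f => #ι < κ ∧ ∀ i, (f i).Small κ

/-- The set of propositional variables occurring in a formula. -/
def vars {V : Type u} : PropForm V → Set V
  | var x => {x}
  | neg φ => φ.vars
  | conj _ f => ⋃ i, (f i).vars

/-- Truth of a formula under a (total) truth assignment `v : V → Bool`, evaluated
recursively; a conjunction is true iff all conjuncts are true. -/
def Sat {V : Type u} (v : V → Bool) : PropForm V → Prop
  | var x => v x = true
  | neg φ => ¬ φ.Sat v
  | conj _ f => ∀ i, (f i).Sat v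

/-- Truth of a formula under a partial truth assignment `s : Γ → Bool`; this is the
truth value `s(φ)` when all variables of `φ` lie in `Γ`. -/
def SatOn {V : Type u} {Γ : Set V} (s : Γ → Bool) : PropForm V → Prop
  | var x => ∃ h : x ∈ Γ, s ⟨x, h⟩ = true
  | neg φ => ¬ φ.SatOn s
  | conj _ f => ∀ i, (f i).SatOn s

/-- The interpretation map `ι` sending a propositional formula to a subset of `α`,
determined by `ι(a δ) = A δ`, `ι(¬φ) = α \ ι(φ)`, and `ι(⋀ᵢ φᵢ) = ⋂ᵢ ι(φᵢ)`. -/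
def interp {V α : Type u} (A : V → Set α) : PropForm V → Set α
  | var x => A x
  | neg φ => (φ.interp A)ᶜ
  | conj _ f => ⋂ i, (f i).interp A

end PropForm
/-- A filter `F` is `κ`-complete if it is closed under intersections of fewer than `κ`
of its members. -/
def IsKappaComplete (κ : Cardinal.{u}) {β : Type u} (F : Filter β) : Prop :=
  ∀ S : Set (Set β), #S < κ → S ⊆ F.sets → ⋂₀ S ∈ F

/-- `κ` has the `lam`-filter extension property if every `κ`-complete (proper) filter on
a set of size `lam` extends to a `κ`-complete ultrafilter. -/
def HasFilterExt (κ lam : Cardinal.{u}) : Prop :=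
  ∀ (β : Type u), #β = lam → ∀ F : Filter β, F.NeBot → IsKappaComplete κ F →
    ∃ U : Ultrafilter β, (U : Filter β) ≤ F ∧ IsKappaComplete κ (U : Filter β)

universe u

open Set

theorem mk_setOf_mk_lt_le (X : Type u) (κ : Cardinal.{u}) :
    #{s : Set X | #s < κ} ≤ κ * max #X ℵ₀ ^< κ := by
  let card : κ.ord.ToType → Cardinal.{u} := fun i => (Ordinal.ToType.mk.symm i).1.card
  have hcover : {s : Set X | #s < κ} ⊆ ⋃ i, {s | #s ≤ card i} := fun s hs =>
    mem_iUnion.2 ⟨Ordinal.ToType.mk ⟨(#s).ord, ord_lt_ord.2 hs⟩, by simp [card]⟩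
  have hpiece (i) : #{s : Set X | #s ≤ card i} ≤ max #X ℵ₀ ^< κ :=
    (mk_bounded_set_le X (card i)).trans <| le_powerlt _ <| lt_ord.1 (Ordinal.ToType.mk.symm i).2
  calc #{s : Set X | #s < κ} ≤ #(⋃ i, {s : Set X | #s ≤ card i}) := mk_le_mk_of_subset hcover
    _ ≤ #κ.ord.ToType * ⨆ i, #{s : Set X | #s ≤ card i} := mk_iUnion_le _
    _ ≤ κ * max #X ℵ₀ ^< κ := by
      rw [mk_ord_toType]
      exact mul_le_mul_right (ciSup_le' hpiece) κ

theorem mk_setOf_mk_lt_le_of_powerlt_eq {X : Type u} {κ lam : Cardinal.{u}} (hX : #X ≤ lam)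
    (hκ : κ ≤ lam) (hlam : ℵ₀ ≤ lam) (hpow : lam ^< κ = lam) :
    #{s : Set X | #s < κ} ≤ lam := calc
  #{s : Set X | #s < κ} ≤ κ * max #X ℵ₀ ^< κ := mk_setOf_mk_lt_le X κ
  _ ≤ lam * lam ^< κ := by
    gcongr
    exact powerlt_le.2 fun μ hμ =>
      (power_le_power_right (max_le hX hlam)).trans (le_powerlt lam hμ)
  _ = lam := by rw [hpow, mul_eq_self hlam]

def IsIndependent {V Λ : Type u} (κ : Cardinal.{u}) (A : V → Set Λ) : Prop :=
  ∀ Γ : Set V, #Γ < κ → ∀ v : V → Bool, ∃ δ, ∀ x ∈ Γ, (δ ∈ A x ↔ v x = true)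

abbrev HausdorffCondition (κ : Cardinal.{u}) (Λ : Type u) : Type u :=
  {p : Set Λ | #p < κ} × {Z : Set {s : Set Λ | #s < κ} | #Z < κ}

section Hausdorff

variable {V Λ : Type u} {κ : Cardinal.{u}}

theorem exists_mk_lt_injOn_inter (hκ : ℵ₀ ≤ κ) {e : V → Set Λ} (he : e.Injective) {Γ : Set V}
    (hΓ : #Γ < κ) : ∃ p : Set Λ, #p < κ ∧ InjOn (e · ∩ p) Γ := by
  have hsep (xy : {xy : Γ × Γ // xy.1 ≠ xy.2}) : ∃ a, ¬(a ∈ e xy.1.1 ↔ a ∈ e xy.1.2) :=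
    not_forall.1 fun h => xy.2 <| Subtype.ext <| he <| Set.ext h
  choose sep hsep using hsep
  refine ⟨range sep, ?_, fun x hx y hy hxy => ?_⟩
  · calc #(range sep) ≤ #{xy : Γ × Γ // xy.1 ≠ xy.2} := mk_range_le
      _ ≤ #Γ * #Γ := (mk_subtype_le _).trans_eq (mul_def _ _).symm
      _ < κ := mul_lt_of_lt hκ hΓ hΓ
  · by_contra hne
    let xy : {xy : Γ × Γ // xy.1 ≠ xy.2} := ⟨(⟨x, hx⟩, ⟨y, hy⟩), fun h => hne congr($h.1)⟩
    refine hsep xy ⟨fun h => ?_, fun h => ?_⟩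
    · exact (hxy.subset ⟨h, mem_range_self xy⟩).1
    · exact (hxy.symm.subset ⟨h, mem_range_self xy⟩).1

/-- Hausdorff's family: the point coding the condition `(p, Z)` lies in the `x`-th set iff
the trace of `e x` on `p` belongs to `Z`. -/
def hausdorffFamily (e : V → Set Λ) (j : HausdorffCondition κ Λ → Λ) (x : V) : Set Λ :=
  j '' {q | e x ∩ q.1 ∈ ((↑) '' (q.2 : Set {s : Set Λ | #s < κ}) : Set (Set Λ))}

theorem isIndependent_hausdorffFamily (hκ : ℵ₀ ≤ κ) {e : V → Set Λ} (he : e.Injective)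
    {j : HausdorffCondition κ Λ → Λ} (hj : j.Injective) :
    IsIndependent κ (hausdorffFamily e j) := by
  intro Γ hΓ v
  obtain ⟨p, hp, hinj⟩ := exists_mk_lt_injOn_inter hκ he hΓ
  let trace (x : V) : {s : Set Λ | #s < κ} :=
    ⟨e x ∩ p, (mk_le_mk_of_subset inter_subset_right).trans_lt hp⟩
  let Z := trace '' {x ∈ Γ | v x = true}
  have hZ : #Z < κ := mk_image_le.trans_lt <| (mk_le_mk_of_subset fun _ hx => hx.1).trans_lt hΓ
  refine ⟨j (⟨p, hp⟩, ⟨Z, hZ⟩), fun x hx => ?_⟩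
  simp only [hausdorffFamily, hj.mem_set_image, mem_ofPred_eq, image_image, Z, trace]
  constructor
  · rintro ⟨y, ⟨hy, hvy⟩, hxy⟩
    rwa [← hinj hy hx hxy]
  · exact fun hvx => ⟨x, ⟨hx, hvx⟩, rfl⟩

theorem exists_isIndependent {κ lam : Cardinal.{u}} (hκ : ℵ₀ ≤ κ) (hκlam : κ ≤ lam)
    (hpow : lam ^< κ = lam) (hΛ : #Λ = lam) (hV : #V ≤ 2 ^ lam) :
    ∃ A : V → Set Λ, IsIndependent κ A := by
  have hlam : ℵ₀ ≤ lam := hκ.trans hκlam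
  obtain ⟨e⟩ : Nonempty (V ↪ Set Λ) := by rwa [← le_def, mk_set, hΛ]
  have hsmall : #{p : Set Λ | #p < κ} ≤ lam :=
    mk_setOf_mk_lt_le_of_powerlt_eq hΛ.le hκlam hlam hpow
  have hcond : #(HausdorffCondition κ Λ) ≤ #Λ := calc
    _ = #{p : Set Λ | #p < κ} * #{Z : Set {s : Set Λ | #s < κ} | #Z < κ} := mul_def _ _
    _ ≤ lam * lam := by
      gcongr
      exact mk_setOf_mk_lt_le_of_powerlt_eq hsmall hκlam hlam hpow
    _ = #Λ := by rw [mul_eq_self hlam, hΛ]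
  obtain ⟨j⟩ := le_def _ _ |>.1 hcond
  exact ⟨hausdorffFamily e j, isIndependent_hausdorffFamily hκ e.injective j.injective⟩

end Hausdorff

section KappaGenerate

variable {β : Type u} {κ : Cardinal.{u}}

def kappaGenerate (hκ : ℵ₀ ≤ κ) (G : Set (Set β)) : Filter β where
  sets := {X | ∃ T ⊆ G, #T < κ ∧ ⋂₀ T ⊆ X}
  univ_sets := ⟨∅, empty_subset G, by simpa using aleph0_pos.trans_le hκ, subset_univ _⟩
  sets_of_superset := fun ⟨T, hTG, hT, hTX⟩ hXY => ⟨T, hTG, hT, hTX.trans hXY⟩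
  inter_sets := fun ⟨T₁, h₁G, h₁, h₁X⟩ ⟨T₂, h₂G, h₂, h₂Y⟩ =>
    ⟨T₁ ∪ T₂, union_subset h₁G h₂G, (mk_union_le _ _).trans_lt (add_lt_of_lt hκ h₁ h₂),
      sInter_union T₁ T₂ ▸ inter_subset_inter h₁X h₂Y⟩

variable {hκ : ℵ₀ ≤ κ} {G : Set (Set β)}

theorem mem_kappaGenerate_iff {X : Set β} :
    X ∈ kappaGenerate hκ G ↔ ∃ T ⊆ G, #T < κ ∧ ⋂₀ T ⊆ X :=
  Iff.rfl

theorem mem_kappaGenerate_of_mem {s : Set β} (hs : s ∈ G) : s ∈ kappaGenerate hκ G :=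
  ⟨{s}, singleton_subset_iff.2 hs, by simpa using one_lt_aleph0.trans_le hκ,
    (sInter_singleton s).le⟩

theorem isKappaComplete_kappaGenerate (hreg : κ.IsRegular) :
    IsKappaComplete κ (kappaGenerate hreg.aleph0_le G) := by
  intro S hS hSG
  choose T hTG hT hTs using fun s : S => mem_kappaGenerate_iff.1 (hSG s.2)
  refine ⟨⋃ s, T s, iUnion_subset hTG,
    (card_iUnion_lt_iff_forall_of_isRegular hreg hS).2 hT, fun a ha s hs => ?_⟩
  exact hTs ⟨s, hs⟩ fun t ht => ha t (mem_iUnion.2 ⟨⟨s, hs⟩, ht⟩)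

theorem kappaGenerate_neBot (hG : ∀ T ⊆ G, #T < κ → (⋂₀ T).Nonempty) :
    (kappaGenerate hκ G).NeBot :=
  Filter.forall_mem_nonempty_iff_neBot.1 fun _ ⟨T, hTG, hT, hTX⟩ => (hG T hTG hT).mono hTX

theorem HasFilterExt.exists_ultrafilter {lam : Cardinal.{u}} (hfe : HasFilterExt κ lam)
    (hβ : #β = lam) (hreg : κ.IsRegular) (hG : ∀ T ⊆ G, #T < κ → (⋂₀ T).Nonempty) :
    ∃ U : Ultrafilter β, IsKappaComplete κ (U : Filter β) ∧ ∀ s ∈ G, s ∈ U := by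
  obtain ⟨U, hUF, hU⟩ := hfe β hβ (kappaGenerate hreg.aleph0_le G) (kappaGenerate_neBot hG)
    (isKappaComplete_kappaGenerate hreg)
  exact ⟨U, hU, fun s hs => hUF (mem_kappaGenerate_of_mem hs)⟩

end KappaGenerate

namespace PropForm

variable {V Λ : Type u} {κ : Cardinal.{u}}

theorem mk_vars_lt (hreg : κ.IsRegular) : ∀ φ : PropForm V, φ.Small κ → #φ.vars < κ
  | var _, _ => by simpa [vars] using one_lt_aleph0.trans_le hreg.aleph0_le
  | neg φ, h => mk_vars_lt hreg φ h
  | conj _ f, ⟨hι, hf⟩ =>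
    (card_iUnion_lt_iff_forall_of_isRegular hreg hι).2 fun i => mk_vars_lt hreg (f i) (hf i)

theorem mem_interp_iff_sat (A : V → Set Λ) {δ : Λ} {v : V → Bool} :
    ∀ {φ : PropForm V}, (∀ x ∈ φ.vars, (δ ∈ A x ↔ v x = true)) → (δ ∈ φ.interp A ↔ φ.Sat v)
  | var x, h => h x rfl
  | neg _, h => not_congr (mem_interp_iff_sat A h)
  | conj _ _, h => mem_iInter.trans <| forall_congr' fun i =>
    mem_interp_iff_sat A fun x hx => h x (mem_iUnion.2 ⟨i, hx⟩)

theorem sat_iff_interp_mem {A : V → Set Λ} {U : Ultrafilter Λ}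
    (hU : IsKappaComplete κ (U : Filter Λ)) {v : V → Bool} (hv : ∀ x, v x = true ↔ A x ∈ U) :
    ∀ φ : PropForm V, φ.Small κ → (φ.Sat v ↔ φ.interp A ∈ U)
  | var x, _ => hv x
  | neg φ, h =>
    (not_congr (sat_iff_interp_mem hU hv φ h)).trans Ultrafilter.compl_mem_iff_notMem.symm
  | conj _ f, ⟨hι, hf⟩ => by
    refine (forall_congr' fun i => sat_iff_interp_mem hU hv (f i) (hf i)).trans
      ⟨fun hall => ?_, ?_⟩
    · simpa [interp] using hU _ (mk_range_le.trans_lt hι) (range_subset_iff.2 hall)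
    · exact fun h i => U.mem_of_superset h (iInter_subset _ i)

theorem exists_mem_interp_of_sat (hreg : κ.IsRegular) {A : V → Set Λ} (hA : IsIndependent κ A)
    {ι : Type u} (hι : #ι < κ) {f : ι → PropForm V} (hf : ∀ i, (f i).Small κ) {v : V → Bool}
    (hv : ∀ i, (f i).Sat v) : ∃ δ, ∀ i, δ ∈ (f i).interp A := by
  have hΓ : #(⋃ i, (f i).vars) < κ :=
    (card_iUnion_lt_iff_forall_of_isRegular hreg hι).2 fun i => mk_vars_lt hreg _ (hf i)
  obtain ⟨δ, hδ⟩ := hA _ hΓ v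
  exact ⟨δ, fun i => (mem_interp_iff_sat A fun x hx => hδ x (mem_iUnion.2 ⟨i, hx⟩)).2 (hv i)⟩

theorem sInter_nonempty_of_subset_interp_image (hreg : κ.IsRegular) {A : V → Set Λ}
    (hA : IsIndependent κ A) {Φ : Set (PropForm V)} (hsmall : ∀ φ ∈ Φ, φ.Small κ)
    (hcons : ∀ Φ' ⊆ Φ, #Φ' < Cardinal.lift.{u + 1} κ → ∃ v : V → Bool, ∀ φ ∈ Φ', φ.Sat v) :
    ∀ T ⊆ interp A '' Φ, #T < κ → (⋂₀ T).Nonempty := by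
  intro T hT hTκ
  choose φ hφΦ hφT using fun t : T => hT t.2
  have hrange : #(range φ) < Cardinal.lift.{u + 1} κ := by
    have := mk_range_le_lift (f := φ)
    rw [lift_id'.{u, u + 1}] at this
    exact this.trans_lt (lift_lt.2 hTκ)
  obtain ⟨v, hv⟩ := hcons _ (range_subset_iff.2 hφΦ) hrange
  obtain ⟨δ, hδ⟩ := exists_mem_interp_of_sat hreg hA hTκ (fun t => hsmall _ (hφΦ t))
    fun t => hv _ (mem_range_self t)
  exact ⟨δ, fun t ht => (hφT ⟨t, ht⟩).subset (hδ ⟨t, ht⟩)⟩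

end PropForm

theorem statement5_general {V : Type u} (κ lam : Cardinal.{u})
    (hreg : κ.IsRegular) (hka : κ ≤ lam)
    (hpow : lam ^< κ = lam) (hfe : HasFilterExt κ lam)
    (hV : #V ≤ 2 ^ lam)
    (Φ : Set (PropForm V)) (hsmall : ∀ φ ∈ Φ, φ.Small κ)
    (hcons : ∀ Φ' ⊆ Φ, #Φ' < Cardinal.lift.{u + 1} κ →
      ∃ v : V → Bool, ∀ φ ∈ Φ', φ.Sat v) :
    ∃ v : V → Bool, ∀ φ ∈ Φ, φ.Sat v := by
  classical
  obtain ⟨A, hA⟩ := exists_isIndependent (Λ := lam.out) hreg.aleph0_le hka hpow (mk_out lam) hV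
  obtain ⟨U, hU, hΦU⟩ := hfe.exists_ultrafilter (mk_out lam) hreg
    (PropForm.sInter_nonempty_of_subset_interp_image hreg hA hsmall hcons)
  refine ⟨fun x => decide (A x ∈ U), fun φ hφ => ?_⟩
  exact (PropForm.sat_iff_interp_mem hU (fun x => decide_eq_true_iff) φ (hsmall φ hφ)).2
    (hΦU _ (mem_image_of_mem _ hφ))

/-- Let `κ ≤ lam` be cardinals with `κ` regular and uncountable and `lam ^< κ = lam`, and
suppose `κ` has the `lam`-filter extension property.  Then every `κ`-consistent set `Φ` of
`L_{κ,1}` propositional formulas over a set `V` of at most `2 ^ lam` propositional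
variables is satisfiable. -/
theorem statement5 {V : Type u} (κ lam : Cardinal.{u})
    (hreg : κ.IsRegular) (hunc : ℵ₀ < κ) (hka : κ ≤ lam)
    (hpow : lam ^< κ = lam) (hfe : HasFilterExt κ lam)
    (hV : #V ≤ 2 ^ lam)
    (Φ : Set (PropForm V)) (hsmall : ∀ φ ∈ Φ, φ.Small κ)
    (hcons : ∀ Φ' ⊆ Φ, #Φ' < Cardinal.lift.{u + 1} κ →
      ∃ v : V → Bool, ∀ φ ∈ Φ', φ.Sat v) :
    ∃ v : V → Bool, ∀ φ ∈ Φ, φ.Sat v :=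
  statement5_general κ lam hreg hka hpow hfe hV Φ hsmall hcons
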